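/- arXiv:2010.15882 — 6 statements merged into one kernel-verified Lean document; each statement's English description precedes it below -/
import Mathlib

section
/- The sequence g_n = \sum_{k=1}^n (p_k - 1)/(p_1 p_2 \cdots p_{k-1}) is strictly increasing in n and satisfies g_n < 3 for all n \ge 1; consequently the infinite series \sum_{k=1}^\infty (p_k - 1)/(p_1 p_2 \cdots p_{k-1}) converges, and its sum f_1 satisfies 2 < f_1 < 3. -/
open scoped BigOperators

/-- `p k` is the `(k+1)`-st prime, i.e. the paper's `p_{k+1}` (so `p 0 = 2`). -/
noncomputable def p (k : ℕ) : ℕ := Nat.nth Nat.Prime k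

/-- The `k`-th summand `(p_{k+1} - 1) / (p_1 ⋯ p_k)` of the series (0-indexed). -/
noncomputable def primeTerm (k : ℕ) : ℝ :=
  ((p k : ℝ) - 1) / ∏ i ∈ Finset.range k, (p i : ℝ)

/-- The partial sum `g n = ∑_{k=1}^{n} (p_k - 1)/(p_1 ⋯ p_{k-1})` (0-indexed sum). -/
noncomputable def g (n : ℕ) : ℝ := ∑ k ∈ Finset.range n, primeTerm k

/-!
By Bertrand's postulate `p_{k+1} ≤ 2 p_k`, so the ratio of consecutive terms is
`(p_{k+1} - 1) / ((p_k - 1) p_k) ≤ (2 p_k - 1) / ((p_k - 1) p_k) ≤ 1/3` once `p_k ≥ 7`.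
The series therefore converges, and its tail from the term `1/5` on is at most
`(1/5) / (1 - 1/3) = 3/10`. Together with the first three terms `1 + 1 + 2/3` this gives
`8/3 < f_1 ≤ 8/3 + 3/10 < 3`.
-/

open Finset

section RatioTest

variable {u : ℕ → ℝ} {r : ℝ}

theorem summable_of_succ_le_mul (hu : ∀ n, 0 ≤ u n) (hr₀ : 0 ≤ r) (hr₁ : r < 1)
    (h : ∀ n, u (n + 1) ≤ r * u n) : Summable u :=
  Summable.of_nonneg_of_le hu (fun n => le_geom hr₀ n fun k _ => h k)
    ((summable_geometric_of_lt_one hr₀ hr₁).mul_right (u 0))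

theorem tsum_le_div_one_sub_of_succ_le_mul (hu : ∀ n, 0 ≤ u n) (hr₀ : 0 ≤ r) (hr₁ : r < 1)
    (h : ∀ n, u (n + 1) ≤ r * u n) : ∑' n, u n ≤ u 0 / (1 - r) := by
  have hgeom := summable_geometric_of_lt_one hr₀ hr₁
  calc ∑' n, u n ≤ ∑' n, r ^ n * u 0 :=
        (summable_of_succ_le_mul hu hr₀ hr₁ h).tsum_le_tsum
          (fun n => le_geom hr₀ n fun k _ => h k) (hgeom.mul_right (u 0))
    _ = u 0 / (1 - r) := by
        rw [tsum_mul_right, tsum_geometric_of_lt_one hr₀ hr₁, div_eq_inv_mul]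

end RatioTest

theorem Nat.nth_prime_succ_le_two_mul (k : ℕ) :
    Nat.nth Nat.Prime (k + 1) ≤ 2 * Nat.nth Nat.Prime k := by
  obtain ⟨q, hq, hlt, hle⟩ :=
    Nat.exists_prime_lt_and_le_two_mul (Nat.nth Nat.Prime k) (Nat.prime_nth_prime k).ne_zero
  exact le_trans (not_lt.1 fun h => (Nat.le_nth_of_lt_nth_succ h hq).not_gt hlt) hle

lemma prod_p_pos (k : ℕ) : 0 < ∏ i ∈ range k, (p i : ℝ) :=
  prod_pos fun i _ => mod_cast (Nat.prime_nth_prime i).pos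

lemma two_le_p (k : ℕ) : (2 : ℝ) ≤ p k :=
  mod_cast (Nat.prime_nth_prime k).two_le

lemma primeTerm_pos (k : ℕ) : 0 < primeTerm k :=
  div_pos (by linarith [two_le_p k]) (prod_p_pos k)

lemma primeTerm_succ (k : ℕ) :
    primeTerm (k + 1) = ((p (k + 1) : ℝ) - 1) / (((p k : ℝ) - 1) * p k) * primeTerm k := by
  have : (p k : ℝ) - 1 ≠ 0 := by linarith [two_le_p k]
  rw [primeTerm, primeTerm, prod_range_succ]
  field_simp

lemma primeTerm_succ_le (k : ℕ) (hk : 3 ≤ k) : primeTerm (k + 1) ≤ 1 / 3 * primeTerm k := by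
  have h7 : (7 : ℝ) ≤ p k := by
    have : p 3 ≤ p k := (Nat.nth_strictMono Nat.infinite_setOfPred_prime).monotone hk
    rw [p, Nat.nth_prime_three_eq_seven] at this
    exact_mod_cast this
  have hbertrand : (p (k + 1) : ℝ) ≤ 2 * p k := mod_cast Nat.nth_prime_succ_le_two_mul k
  have hratio : ((p (k + 1) : ℝ) - 1) / (((p k : ℝ) - 1) * p k) ≤ 1 / 3 := by
    rw [div_le_iff₀ (by nlinarith)]
    nlinarith
  rw [primeTerm_succ]
  exact mul_le_mul_of_nonneg_right hratio (primeTerm_pos k).le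

lemma primeTerm_three : primeTerm 3 = 1 / 5 := by
  simp only [primeTerm, p, prod_range_succ, prod_range_zero, Nat.nth_prime_zero_eq_two,
    Nat.nth_prime_one_eq_three, Nat.nth_prime_two_eq_five, Nat.nth_prime_three_eq_seven]
  norm_num

lemma g_three : g 3 = 8 / 3 := by
  simp only [g, primeTerm, p, sum_range_succ, sum_range_zero, prod_range_succ, prod_range_zero,
    Nat.nth_prime_zero_eq_two, Nat.nth_prime_one_eq_three, Nat.nth_prime_two_eq_five]
  norm_num

lemma g_strictMono : StrictMono g :=
  strictMono_nat_of_lt_succ fun n => by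
    rw [g, g, sum_range_succ]
    linarith [primeTerm_pos n]

lemma primeTerm_tail_succ_le (n : ℕ) : primeTerm (n + 1 + 3) ≤ 1 / 3 * primeTerm (n + 3) :=
  primeTerm_succ_le (n + 3) (by omega)

lemma summable_primeTerm : Summable primeTerm :=
  (summable_nat_add_iff 3).1 <| summable_of_succ_le_mul (fun n => (primeTerm_pos _).le)
    (by norm_num) (by norm_num) primeTerm_tail_succ_le

lemma tsum_primeTerm_lt_three : ∑' k, primeTerm k < 3 := by
  have htail : ∑' n, primeTerm (n + 3) ≤ 3 / 10 := by
    have := tsum_le_div_one_sub_of_succ_le_mul (u := fun n => primeTerm (n + 3))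
      (fun n => (primeTerm_pos _).le) (by norm_num) (by norm_num) primeTerm_tail_succ_le
    rw [zero_add, primeTerm_three] at this
    linarith
  have hhead : ∑ k ∈ range 3, primeTerm k = 8 / 3 := g_three
  rw [← summable_primeTerm.sum_add_tsum_nat_add 3, hhead]
  linarith

theorem statement0 :
    StrictMono g ∧ (∀ n, 1 ≤ n → g n < 3) ∧ Summable primeTerm ∧
      2 < ∑' k, primeTerm k ∧ (∑' k, primeTerm k) < 3 := by
  have g_le_tsum (n : ℕ) : g n ≤ ∑' k, primeTerm k :=
    summable_primeTerm.sum_le_tsum _ fun k _ => (primeTerm_pos k).le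
  refine ⟨g_strictMono, fun n _ => (g_le_tsum n).trans_lt tsum_primeTerm_lt_three,
    summable_primeTerm, ?_, tsum_primeTerm_lt_three⟩
  calc (2 : ℝ) < g 3 := by norm_num [g_three]
    _ ≤ ∑' k, primeTerm k := g_le_tsum 3
end

section
/- For n \ge 1 define F_n = \sum_{k=n}^\infty (p_k - 1)/(p_n p_{n+1} \cdots p_{k-1}) (with the empty product for k = n equal to 1). Then p_n < F_n < p_n + 1 for every n \ge 1, and consequently \lfloor F_n \rfloor = p_n. -/
/-!
Write `q j = p_{n+j}` and `P j = q 0 ⋯ q (j-1)`, so that `F_n = ∑ (q j - 1) / P j`. For a constant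
`c ≥ 0` the series `∑ ((q j + c) / P j - (q (j+1) + c) / P (j+1))` telescopes to `q 0 + c` (its
terms tend to `0` because `q (j+1) < 2 q j` by Bertrand's postulate), and its `j`-th term exceeds
that of `F_n` by `((c + 1) q j - q (j+1) - c) / P (j+1)`. For `c = 0` this is negative, giving
`p_n < F_n`. For `c = 1` it is nonnegative by Bertrand's postulate, and positive for some `j`:
otherwise `p_{n+1+j} = 2^j (r - 1) + 1` for all `j`, where `r = p_{n+1}` is odd, and by Fermat's
little theorem `r` divides the larger prime `p_{n+r}`.
-/

open scoped BigOperators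

/-- `tailF m` is the paper's `F_{m+1} = ∑_{k=m+1}^∞ (p_k - 1)/(p_{m+1} ⋯ p_{k-1})`. -/
noncomputable def tailF (m : ℕ) : ℝ :=
  ∑' j : ℕ, ((p (m + j) : ℝ) - 1) / ∏ i ∈ Finset.range j, (p (m + i) : ℝ)

open Finset Filter Topology

theorem hasSum_sub_succ_of_antitone {u : ℕ → ℝ} (hu : Antitone u)
    (h0 : Tendsto u atTop (𝓝 0)) : HasSum (fun n ↦ u n - u (n + 1)) (u 0) := by
  refine (hasSum_iff_tendsto_nat_of_nonneg (fun n ↦ sub_nonneg.2 (hu n.le_succ)) _).2 ?_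
  simp_rw [sum_range_sub']
  simpa using tendsto_const_nhds.sub h0

section SeriesBounds

variable {q : ℕ → ℝ}

theorem two_pow_le_prod_range (h2 : ∀ j, 2 ≤ q j) (j : ℕ) : (2 : ℝ) ^ j ≤ ∏ i ∈ range j, q i := by
  simpa using prod_le_prod (fun _ _ ↦ zero_le_two) (fun i (_ : i ∈ range j) ↦ h2 i)

theorem prod_range_pos (h2 : ∀ j, 2 ≤ q j) (j : ℕ) : 0 < ∏ i ∈ range j, q i :=
  (pow_pos two_pos j).trans_le (two_pow_le_prod_range h2 j)

theorem antitone_add_div_prod_range (h2 : ∀ j, 2 ≤ q j)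
    (hdouble : ∀ j, q (j + 1) + 1 ≤ 2 * q j) {c : ℝ} (hc0 : 0 ≤ c) :
    Antitone fun j ↦ (q j + c) / ∏ i ∈ range j, q i := by
  refine antitone_nat_of_succ_le fun j ↦ ?_
  have hq := h2 j
  rw [prod_range_succ, mul_comm, ← div_div,
    div_le_div_iff_of_pos_right (prod_range_pos h2 j), div_le_iff₀ (by positivity)]
  nlinarith [hdouble j]

theorem add_div_prod_range_succ_le (h2 : ∀ j, 2 ≤ q j)
    (hdouble : ∀ j, q (j + 1) + 1 ≤ 2 * q j) {c : ℝ} (hc1 : c ≤ 1) (j : ℕ) :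
    (q (j + 1) + c) / ∏ i ∈ range (j + 1), q i ≤ 2 * (1 / 2) ^ j := by
  have hq := h2 j
  have hP := prod_range_pos h2 j
  calc (q (j + 1) + c) / ∏ i ∈ range (j + 1), q i
      ≤ (2 * q j) / ((∏ i ∈ range j, q i) * q j) := by
        rw [prod_range_succ]
        gcongr
        linarith [hdouble j]
    _ = 2 / ∏ i ∈ range j, q i := by field_simp
    _ ≤ 2 / 2 ^ j := by gcongr; exact two_pow_le_prod_range h2 j
    _ = 2 * (1 / 2) ^ j := by rw [one_div_pow, mul_one_div]

theorem tendsto_add_div_prod_range (h2 : ∀ j, 2 ≤ q j)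
    (hdouble : ∀ j, q (j + 1) + 1 ≤ 2 * q j) {c : ℝ} (hc0 : 0 ≤ c) (hc1 : c ≤ 1) :
    Tendsto (fun j ↦ (q j + c) / ∏ i ∈ range j, q i) atTop (𝓝 0) := by
  rw [← tendsto_add_atTop_iff_nat 1]
  refine squeeze_zero (fun j ↦ ?_) (add_div_prod_range_succ_le h2 hdouble hc1) ?_
  · have := h2 (j + 1)
    exact div_nonneg (by linarith) (prod_range_pos h2 _).le
  · simpa using (tendsto_pow_atTop_nhds_zero_of_lt_one (by norm_num : (0 : ℝ) ≤ 1 / 2)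
      (by norm_num)).const_mul 2

theorem hasSum_add_div_prod_range_sub (h2 : ∀ j, 2 ≤ q j)
    (hdouble : ∀ j, q (j + 1) + 1 ≤ 2 * q j) {c : ℝ} (hc0 : 0 ≤ c) (hc1 : c ≤ 1) :
    HasSum (fun j ↦ (q j + c) / ∏ i ∈ range j, q i -
      (q (j + 1) + c) / ∏ i ∈ range (j + 1), q i) (q 0 + c) := by
  simpa using hasSum_sub_succ_of_antitone (antitone_add_div_prod_range h2 hdouble hc0)
    (tendsto_add_div_prod_range h2 hdouble hc0 hc1)

theorem sub_one_div_prod_range_eq (h2 : ∀ j, 2 ≤ q j) (c : ℝ) (j : ℕ) :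
    (q j - 1) / ∏ i ∈ range j, q i =
      (q j + c) / ∏ i ∈ range j, q i - (q (j + 1) + c) / ∏ i ∈ range (j + 1), q i -
        ((c + 1) * q j - q (j + 1) - c) / ∏ i ∈ range (j + 1), q i := by
  have := h2 j
  have := (prod_range_pos h2 j).ne'
  rw [prod_range_succ]
  field_simp
  ring

theorem sub_one_div_prod_range_le (h2 : ∀ j, 2 ≤ q j)
    (hdouble : ∀ j, q (j + 1) + 1 ≤ 2 * q j) (j : ℕ) :
    (q j - 1) / ∏ i ∈ range j, q i ≤
      (q j + 1) / ∏ i ∈ range j, q i - (q (j + 1) + 1) / ∏ i ∈ range (j + 1), q i := by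
  rw [sub_one_div_prod_range_eq h2 1 j]
  exact sub_le_self _ (div_nonneg (by linarith [hdouble j]) (prod_range_pos h2 _).le)

theorem summable_sub_one_div_prod_range (h2 : ∀ j, 2 ≤ q j)
    (hdouble : ∀ j, q (j + 1) + 1 ≤ 2 * q j) :
    Summable fun j ↦ (q j - 1) / ∏ i ∈ range j, q i :=
  (hasSum_add_div_prod_range_sub h2 hdouble zero_le_one le_rfl).summable.of_nonneg_of_le
    (fun j ↦ div_nonneg (by linarith [h2 j]) (prod_range_pos h2 j).le)
    (sub_one_div_prod_range_le h2 hdouble)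

theorem lt_tsum_sub_one_div_prod_range (h2 : ∀ j, 2 ≤ q j) (hq : StrictMono q)
    (hdouble : ∀ j, q (j + 1) + 1 ≤ 2 * q j) :
    q 0 < ∑' j, (q j - 1) / ∏ i ∈ range j, q i := by
  have hlt : ∀ j, q j / ∏ i ∈ range j, q i - q (j + 1) / ∏ i ∈ range (j + 1), q i <
      (q j - 1) / ∏ i ∈ range j, q i := fun j ↦ by
    have heq := sub_one_div_prod_range_eq h2 0 j
    simp only [add_zero, zero_add, one_mul, sub_zero] at heq
    have := div_neg_of_neg_of_pos (sub_neg.2 (hq j.lt_succ_self)) (prod_range_pos h2 (j + 1))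
    linarith
  have hsum := hasSum_add_div_prod_range_sub h2 hdouble le_rfl zero_le_one
  simp only [add_zero] at hsum
  exact hasSum_lt (fun j ↦ (hlt j).le) (hlt 0) hsum
    (summable_sub_one_div_prod_range h2 hdouble).hasSum

theorem tsum_sub_one_div_prod_range_lt (h2 : ∀ j, 2 ≤ q j)
    (hdouble : ∀ j, q (j + 1) + 1 ≤ 2 * q j) (hstrict : ∃ j, q (j + 1) + 1 < 2 * q j) :
    ∑' j, (q j - 1) / ∏ i ∈ range j, q i < q 0 + 1 := by
  obtain ⟨k, hk⟩ := hstrict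
  have hlt : (q k - 1) / ∏ i ∈ range k, q i <
      (q k + 1) / ∏ i ∈ range k, q i - (q (k + 1) + 1) / ∏ i ∈ range (k + 1), q i := by
    rw [sub_one_div_prod_range_eq h2 1 k]
    exact sub_lt_self _ (div_pos (by linarith) (prod_range_pos h2 _))
  simpa using hasSum_lt (sub_one_div_prod_range_le h2 hdouble) hlt
    (summable_sub_one_div_prod_range h2 hdouble).hasSum
    (hasSum_add_div_prod_range_sub h2 hdouble zero_le_one le_rfl)

end SeriesBounds

theorem eq_two_pow_mul_of_add_one_eq_two_mul {a : ℕ → ℕ} (ha : ∀ j, a (j + 1) + 1 = 2 * a j)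
    (j : ℕ) : a j = 2 ^ j * (a 0 - 1) + 1 := by
  have h0 : 1 ≤ a 0 := by have := ha 0; omega
  induction j with
  | zero => omega
  | succ j ih =>
    have := ha j
    rw [ih] at this
    rw [pow_succ]
    linarith

theorem dvd_of_add_one_eq_two_mul {a : ℕ → ℕ} (ha : ∀ j, a (j + 1) + 1 = 2 * a j)
    (hprime : (a 0).Prime) (htwo : a 0 ≠ 2) : a 0 ∣ a (a 0 - 1) := by
  have := Fact.mk hprime
  have h2 : (2 : ZMod (a 0)) ≠ 0 := fun h ↦ htwo <|
    (Nat.prime_dvd_prime_iff_eq hprime Nat.prime_two).1 <|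
      (ZMod.natCast_eq_zero_iff 2 (a 0)).1 (by exact_mod_cast h)
  rw [← ZMod.natCast_eq_zero_iff, eq_two_pow_mul_of_add_one_eq_two_mul ha (a 0 - 1)]
  push_cast [Nat.cast_sub hprime.one_le]
  rw [ZMod.natCast_self, ZMod.pow_card_sub_one_eq_one h2]
  ring

theorem p_prime (k : ℕ) : (p k).Prime := Nat.prime_nth_prime k

theorem strictMono_p : StrictMono p := Nat.nth_strictMono Nat.infinite_setOfPred_prime

theorem p_succ_add_one_le_two_mul (k : ℕ) : p (k + 1) + 1 ≤ 2 * p k := by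
  obtain ⟨r, hr, hlt, hle⟩ := Nat.exists_prime_lt_and_le_two_mul (p k) (p_prime k).ne_zero
  have hne : r ≠ 2 * p k := by
    rintro rfl
    simp [Nat.prime_mul_iff, Nat.prime_two, (p_prime k).ne_one] at hr
  have : p (k + 1) ≤ r := le_of_not_gt fun h ↦ (Nat.le_nth_of_lt_nth_succ h hr).not_gt hlt
  omega

theorem exists_p_succ_add_one_lt_two_mul (m : ℕ) : ∃ j, p (m + j + 1) + 1 < 2 * p (m + j) := by
  by_contra! h
  set a : ℕ → ℕ := fun j ↦ p (m + 1 + j)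
  have ha : ∀ j, a (j + 1) + 1 = 2 * a j := fun j ↦ by
    have hle := p_succ_add_one_le_two_mul (m + 1 + j)
    have hge := h (1 + j)
    rw [← add_assoc] at hge
    exact le_antisymm hle hge
  have hgt : 2 < a 0 := (p_prime m).two_le.trans_lt (strictMono_p m.lt_succ_self)
  have hdvd := dvd_of_add_one_eq_two_mul ha (p_prime _) hgt.ne'
  have hlt : a 0 < a (a 0 - 1) := strictMono_p (by omega)
  exact hlt.ne ((Nat.prime_dvd_prime_iff_eq (p_prime _) (p_prime _)).1 hdvd)

theorem tailF_mem_Ioo (n : ℕ) : tailF n ∈ Set.Ioo (p n : ℝ) (p n + 1) := by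
  have h2 : ∀ j, (2 : ℝ) ≤ p (n + j) := fun j ↦ by exact_mod_cast (p_prime _).two_le
  have hmono : StrictMono fun j ↦ (p (n + j) : ℝ) :=
    Nat.strictMono_cast.comp (strictMono_p.comp (strictMono_id.const_add n))
  have hdouble : ∀ j, (p (n + (j + 1)) : ℝ) + 1 ≤ 2 * p (n + j) := fun j ↦ by
    exact_mod_cast p_succ_add_one_le_two_mul (n + j)
  have hstrict : ∃ j, (p (n + (j + 1)) : ℝ) + 1 < 2 * p (n + j) := by
    obtain ⟨j, hj⟩ := exists_p_succ_add_one_lt_two_mul n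
    exact ⟨j, by exact_mod_cast hj⟩
  exact ⟨lt_tsum_sub_one_div_prod_range h2 hmono hdouble,
    tsum_sub_one_div_prod_range_lt h2 hdouble hstrict⟩

/-- `p_n < F_n < p_n + 1`, hence `⌊F_n⌋ = p_n` (here 0-indexed). -/
theorem statement4 :
    ∀ n, (p n : ℝ) < tailF n ∧ tailF n < (p n : ℝ) + 1 ∧ ⌊tailF n⌋ = (p n : ℤ) := by
  intro n
  obtain ⟨hlower, hupper⟩ := tailF_mem_Ioo n
  exact ⟨hlower, hupper, Int.floor_eq_iff.2 ⟨by exact_mod_cast hlower.le, by exact_mod_cast hupper⟩⟩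
end

section
/- The constant f_1 = \sum_{k=1}^\infty (p_k - 1)/(p_1 p_2 \cdots p_{k-1}) is irrational. -/
open scoped BigOperators

/-!
Write `f_n` for the value of the series built from the shifted sequence `p_n, p_{n+1}, …`
(`reprConst (fun i => a (i + n))` below, for a general sequence `a` in place of the primes).
Then `f_{n+1} = p_n (f_n - p_n + 1)`, and Bertrand's postulate `p_{n+1} ≤ 2 p_n` squeezes
`p_n < f_n ≤ p_n + 3` once `p_n ≥ 6`. If `f_0 = m / b`, the recurrence keeps every `b f_n` an
integer, so `f_n ≥ p_n + 1 / b`; feeding this back into the recurrence and the upper bound gives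
`p_{n+1} ≥ (1 + 1 / (2b)) p_n` for all large `n`. The primes would then grow geometrically, which
contradicts the divergence of `∑ 1 / p`.
-/

open Finset Filter

noncomputable def reprTerm (a : ℕ → ℕ) (k : ℕ) : ℝ :=
  ((a k : ℝ) - 1) / ∏ i ∈ range k, (a i : ℝ)

noncomputable def reprConst (a : ℕ → ℕ) : ℝ := ∑' k, reprTerm a k

structure IsBertrandSeq (a : ℕ → ℕ) : Prop where
  strictMono : StrictMono a
  two_le_zero : 2 ≤ a 0
  le_two_mul : ∀ n, a (n + 1) ≤ 2 * a n

lemma reprTerm_succ (a : ℕ → ℕ) (k : ℕ) :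
    reprTerm a (k + 1) = reprTerm (fun i => a (i + 1)) k / a 0 := by
  simp only [reprTerm, prod_range_succ', div_div, mul_comm]

namespace IsBertrandSeq

variable {a : ℕ → ℕ}

lemma two_le (ha : IsBertrandSeq a) (n : ℕ) : 2 ≤ a n :=
  ha.two_le_zero.trans (ha.strictMono.monotone n.zero_le)

lemma shift (ha : IsBertrandSeq a) (n : ℕ) : IsBertrandSeq (fun i => a (i + n)) where
  strictMono := ha.strictMono.comp (add_left_strictMono (a := n))
  two_le_zero := ha.two_le _
  le_two_mul i := by simpa only [add_right_comm] using ha.le_two_mul (i + n)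

lemma le_two_pow_mul (ha : IsBertrandSeq a) (k : ℕ) : a k ≤ 2 ^ k * a 0 := by
  induction k with
  | zero => simp
  | succ k ih => calc
      a (k + 1) ≤ 2 * a k := ha.le_two_mul k
      _ ≤ 2 ^ (k + 1) * a 0 := by rw [pow_succ', mul_assoc]; exact Nat.mul_le_mul_left 2 ih

lemma reprTerm_nonneg (ha : IsBertrandSeq a) (k : ℕ) : 0 ≤ reprTerm a k := by
  have : (1 : ℝ) ≤ a k := by exact_mod_cast (ha.two_le k).trans' one_le_two
  unfold reprTerm
  exact div_nonneg (by linarith) (prod_nonneg fun i _ => Nat.cast_nonneg _)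

lemma reprTerm_le (ha : IsBertrandSeq a) (k : ℕ) : reprTerm a k ≤ a 0 * (2 / a 0) ^ k := by
  have h0 : (0 : ℝ) < a 0 := by exact_mod_cast (ha.two_le 0).trans_lt' two_pos
  have hnum : (a k : ℝ) - 1 ≤ 2 ^ k * a 0 := by
    have : (a k : ℝ) ≤ 2 ^ k * a 0 := by exact_mod_cast ha.le_two_pow_mul k
    linarith
  have hden : (a 0 : ℝ) ^ k ≤ ∏ i ∈ range k, (a i : ℝ) := by
    have := pow_card_le_prod (range k) a (a 0) fun i _ => ha.strictMono.monotone i.zero_le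
    rw [card_range] at this
    exact_mod_cast this
  calc reprTerm a k ≤ 2 ^ k * a 0 / a 0 ^ k :=
        div_le_div₀ (by positivity) hnum (by positivity) hden
    _ = a 0 * (2 / a 0) ^ k := by rw [div_pow]; field_simp

lemma summable_reprTerm (ha : IsBertrandSeq a) : Summable (reprTerm a) := by
  have h3 : (3 : ℝ) ≤ a (0 + 1) := by
    exact_mod_cast ha.two_le_zero.trans_lt (ha.strictMono one_pos)
  have hr : 2 / (a (0 + 1) : ℝ) < 1 := by rw [div_lt_one (by linarith)]; linarith
  rw [← summable_nat_add_iff 1]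
  simp only [reprTerm_succ]
  refine .div_const (.of_nonneg_of_le (ha.shift 1).reprTerm_nonneg (ha.shift 1).reprTerm_le ?_) _
  exact (summable_geometric_of_lt_one (by positivity) hr).mul_left _

lemma reprConst_eq (ha : IsBertrandSeq a) :
    reprConst a = (a 0 - 1) + reprConst (fun i => a (i + 1)) / a 0 := by
  rw [reprConst, ha.summable_reprTerm.tsum_eq_zero_add, reprConst, ← tsum_div_const]
  simp only [reprTerm_succ]
  simp [reprTerm]

lemma reprConst_shift_succ (ha : IsBertrandSeq a) (n : ℕ) :
    reprConst (fun i => a (i + (n + 1))) = a n * (reprConst (fun i => a (i + n)) - a n + 1) := by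
  have h0 : (a n : ℝ) ≠ 0 := by exact_mod_cast (ha.two_le n).trans_lt' two_pos |>.ne'
  have hshift : (fun i => a (i + 1 + n)) = fun i => a (i + (n + 1)) := by
    funext i; rw [add_right_comm, add_assoc]
  have := (ha.shift n).reprConst_eq
  simp only [zero_add, hshift] at this
  rw [this]
  field_simp
  ring

lemma reprConst_pos (ha : IsBertrandSeq a) : 0 < reprConst a :=
  ha.summable_reprTerm.tsum_pos ha.reprTerm_nonneg 0 <| by
    have : (2 : ℝ) ≤ a 0 := by exact_mod_cast ha.two_le 0
    simp only [reprTerm, range_zero, prod_empty, div_one]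
    linarith

lemma lt_reprConst (ha : IsBertrandSeq a) : (a 0 : ℝ) < reprConst a := by
  have h0 : (0 : ℝ) < a 0 := by exact_mod_cast (ha.two_le 0).trans_lt' two_pos
  have h01 : (a 0 : ℝ) + 1 ≤ a 1 := by exact_mod_cast ha.strictMono zero_lt_one
  have hshift : (a 1 : ℝ) - 1 < reprConst (fun i => a (i + 1)) := by
    have h1 : (0 : ℝ) < a (0 + 1) := by rw [zero_add]; linarith
    rw [(ha.shift 1).reprConst_eq]
    exact lt_add_of_pos_right _ (div_pos ((ha.shift 1).shift 1).reprConst_pos h1)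
  rw [ha.reprConst_eq]
  have : 1 < reprConst (fun i => a (i + 1)) / a 0 := by rw [one_lt_div h0]; linarith
  linarith

lemma reprConst_le (ha : IsBertrandSeq a) (h6 : 6 ≤ a 0) : reprConst a ≤ a 0 + 3 := by
  have h6' : (6 : ℝ) ≤ a 0 := by exact_mod_cast h6
  have hr0 : 0 ≤ 2 / (a 0 : ℝ) := by positivity
  have hr : 2 / (a 0 : ℝ) < 1 := by rw [div_lt_one (by linarith)]; linarith
  calc reprConst a ≤ ∑' k, a 0 * (2 / (a 0 : ℝ)) ^ k :=
        ha.summable_reprTerm.tsum_le_tsum ha.reprTerm_le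
          ((summable_geometric_of_lt_one hr0 hr).mul_left _)
    _ = a 0 * (1 - 2 / (a 0 : ℝ))⁻¹ := by rw [tsum_mul_left, tsum_geometric_of_lt_one hr0 hr]
    _ ≤ a 0 + 3 := by
      rw [one_sub_div (by positivity), inv_div, mul_div_assoc', div_le_iff₀ (by linarith)]
      nlinarith

lemma int_mul_reprConst_shift (ha : IsBertrandSeq a) {b : ℕ} {z : ℤ} (hz : b * reprConst a = z)
    (n : ℕ) : ∃ z : ℤ, b * reprConst (fun i => a (i + n)) = z := by
  induction n with
  | zero => exact ⟨z, by simpa using hz⟩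
  | succ n ih =>
    obtain ⟨z, hz⟩ := ih
    refine ⟨a n * (z - b * a n + b), ?_⟩
    rw [ha.reprConst_shift_succ]
    push_cast
    linear_combination (a n : ℝ) * hz

lemma two_mul_add_one_mul_le (ha : IsBertrandSeq a) {b : ℕ} (hb : 0 < b)
    (hint : ∀ n, ∃ z : ℤ, b * reprConst (fun i => a (i + n)) = z) {n : ℕ}
    (hn : 6 * b ≤ a n) :
    (2 * b + 1) * a n ≤ 2 * b * a (n + 1) := by
  obtain ⟨z, hz⟩ := hint n
  have hlt : (a n : ℝ) < reprConst (fun i => a (i + n)) := by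
    simpa only [zero_add] using (ha.shift n).lt_reprConst
  have hzlow : (b * a n + 1 : ℝ) ≤ z := by
    have : ((b * a n : ℕ) : ℤ) < z := by
      rw [← Int.cast_lt (R := ℝ), ← hz]; push_cast
      exact mul_lt_mul_of_pos_left hlt (by exact_mod_cast hb)
    exact_mod_cast this
  have hup : reprConst (fun i => a (i + (n + 1))) ≤ a (n + 1) + 3 := by
    simpa only [zero_add] using (ha.shift (n + 1)).reprConst_le <| by
      simp only [zero_add]; have := ha.strictMono (Nat.lt_add_one n); omega
  rw [ha.reprConst_shift_succ] at hup
  have hn' : (6 * b : ℝ) ≤ a n := by exact_mod_cast hn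
  have key : (a n : ℝ) * (b + 1) ≤ b * a (n + 1) + 3 * b := calc
    (a n : ℝ) * (b + 1) ≤ a n * (z - b * a n + b) :=
        mul_le_mul_of_nonneg_left (by linarith) (by positivity)
    _ = b * (a n * (reprConst (fun i => a (i + n)) - a n + 1)) := by rw [← hz]; ring
    _ ≤ b * (a (n + 1) + 3) := mul_le_mul_of_nonneg_left hup (by positivity)
    _ = b * a (n + 1) + 3 * b := by ring
  have : ((2 * b + 1) * a n : ℝ) ≤ 2 * b * a (n + 1) := by linarith
  exact_mod_cast this

theorem irrational_reprConst (ha : IsBertrandSeq a) (hdiv : ¬ Summable fun n => (1 : ℝ) / a n) :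
    Irrational (reprConst a) := by
  rintro ⟨q, hq⟩
  have hint := ha.int_mul_reprConst_shift (b := q.den) (z := q.num) <| by
    rw [← hq]; exact_mod_cast q.den_mul_eq_num
  have hd : (0 : ℝ) < q.den := by exact_mod_cast q.pos
  refine hdiv (summable_of_ratio_norm_eventually_le (r := 2 * q.den / (2 * q.den + 1)) ?_ ?_)
  · rw [div_lt_one (by positivity)]; linarith
  filter_upwards [ha.strictMono.tendsto_atTop.eventually_ge_atTop (6 * q.den)] with n hn
  have hgrowth : ((2 * q.den + 1) * a n : ℝ) ≤ 2 * q.den * a (n + 1) := by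
    exact_mod_cast ha.two_mul_add_one_mul_le q.pos hint hn
  have h0 : (0 : ℝ) < a n := by exact_mod_cast (ha.two_le n).trans_lt' two_pos
  have h1 : (0 : ℝ) < a (n + 1) := by exact_mod_cast (ha.two_le _).trans_lt' two_pos
  rw [Real.norm_of_nonneg (by positivity), Real.norm_of_nonneg (by positivity), div_mul_div_comm,
    div_le_div_iff₀ h1 (mul_pos (by positivity) h0)]
  linarith

end IsBertrandSeq

lemma Nat.nth_prime_succ_le_two_mul_s5 (n : ℕ) : nth Prime (n + 1) ≤ 2 * nth Prime n := by
  obtain ⟨q, hq, hlt, hle⟩ :=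
    exists_prime_lt_and_le_two_mul (nth Prime n) (prime_nth_prime n).ne_zero
  refine le_trans ?_ hle
  by_contra! h
  exact hlt.not_ge (le_nth_of_lt_nth_succ h hq)

lemma Nat.not_summable_one_div_nth_prime : ¬ Summable fun n => (1 : ℝ) / nth Prime n := by
  intro h
  apply not_summable_one_div_on_primes
  rw [← (nth_injective infinite_setOfPred_prime).summable_iff]
  · simpa [Function.comp_def, Set.indicator, prime_nth_prime] using h
  · intro x hx
    rw [range_nth_of_infinite infinite_setOfPred_prime] at hx
    exact Set.indicator_of_notMem hx _

lemma isBertrandSeq_nth_prime : IsBertrandSeq (Nat.nth Nat.Prime) where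
  strictMono := Nat.nth_strictMono Nat.infinite_setOfPred_prime
  two_le_zero := Nat.nth_prime_zero_eq_two.ge
  le_two_mul := Nat.nth_prime_succ_le_two_mul_s5

/-- The prime-generating constant `f_1 = ∑_{k=1}^∞ (p_k - 1)/(p_1 ⋯ p_{k-1})` is irrational. -/
theorem statement5 : Irrational (∑' k, primeTerm k) :=
  isBertrandSeq_nth_prime.irrational_reprConst Nat.not_summable_one_div_nth_prime
end

section
/- Let a_1, a_2, a_3, \ldots be a sequence of integers with a_1 \ge 2 and a_n < a_{n+1} \le 2 a_n - 1 for all n \ge 1, and suppose in addition that for every n there exists some k \ge n with a_{k+1} \le 2 a_k - 2. Let c = \sum_{k=1}^\infty (a_k - 1)/(a_1 a_2 \cdots a_{k-1}) (the empty product for k = 1 being 1), and define f_1 = c and f_{n+1} = \lfloor f_n \rfloor (f_n - \lfloor f_n \rfloor + 1). Then \lfloor f_n \rfloor = a_n for every n \ge 1. -/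
/-!
Write `c(b) = ∑ₖ (b k - 1) / (b 0 ⋯ b (k-1))`. Peeling off the first term gives
`c(b) = b 0 - 1 + c(b ∘ succ) / b 0`, which is exactly the recursion for `f` once
`⌊c(b)⌋ = b 0`; so `f n` is the constant of the shifted sequence `a n, a (n+1), …`.
The floor is computed by the telescoping bound `(b k - 1)/Pₖ ≤ (b k + 1)/Pₖ - (b (k+1) + 1)/Pₖ₊₁`,
equivalent to `b (k+1) ≤ 2 b k - 1`, which gives `c(b) ≤ b 0 + 1`; a single index with
`b (k+1) ≤ 2 b k - 2` makes this strict, and `c(b) ≥ b 0` comes from the first two terms.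
-/

open Finset

noncomputable def bertrandConstant (b : ℕ → ℝ) : ℝ :=
  ∑' k, (b k - 1) / ∏ i ∈ range k, b i

lemma sub_one_div_le_sub_div {x y P : ℝ} (hP : 0 < P) (hx : 0 < x) (hy : y ≤ 2 * x - 1) :
    (x - 1) / P ≤ (x + 1) / P - (y + 1) / (P * x) := by
  have hgap : (x + 1) / P - (y + 1) / (P * x) - (x - 1) / P = (2 * x - y - 1) / (P * x) := by
    field_simp
    ring
  have : 0 ≤ (2 * x - y - 1) / (P * x) := div_nonneg (by linarith) (by positivity)
  linarith

section

variable {b : ℕ → ℝ}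

lemma prod_range_pos_of_one_le (hb : ∀ n, 1 ≤ b n) (k : ℕ) : 0 < ∏ i ∈ range k, b i :=
  prod_pos fun i _ => one_pos.trans_le (hb i)

lemma bertrandConstant_term_nonneg (hb : ∀ n, 1 ≤ b n) (k : ℕ) :
    0 ≤ (b k - 1) / ∏ i ∈ range k, b i :=
  div_nonneg (sub_nonneg.2 (hb k)) (prod_range_pos_of_one_le hb k).le

lemma sum_range_bertrandConstant_term_le (hb : ∀ n, 1 ≤ b n)
    (hup : ∀ n, b (n + 1) ≤ 2 * b n - 1) (m : ℕ) :
    ∑ k ∈ range m, (b k - 1) / ∏ i ∈ range k, b i ≤ b 0 + 1 := by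
  set g : ℕ → ℝ := fun k => (b k + 1) / ∏ i ∈ range k, b i
  calc ∑ k ∈ range m, (b k - 1) / ∏ i ∈ range k, b i
      ≤ ∑ k ∈ range m, (g k - g (k + 1)) := sum_le_sum fun k _ => by
        simp only [g, prod_range_succ]
        exact sub_one_div_le_sub_div (prod_range_pos_of_one_le hb k)
          (one_pos.trans_le (hb k)) (hup k)
    _ = g 0 - g m := sum_range_sub' g m
    _ ≤ g 0 := sub_le_self _ (div_nonneg (by linarith [hb m]) (prod_range_pos_of_one_le hb m).le)
    _ = b 0 + 1 := by simp [g]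

lemma summable_bertrandConstant_term (hb : ∀ n, 1 ≤ b n) (hup : ∀ n, b (n + 1) ≤ 2 * b n - 1) :
    Summable fun k => (b k - 1) / ∏ i ∈ range k, b i :=
  summable_of_sum_range_le (bertrandConstant_term_nonneg hb)
    (sum_range_bertrandConstant_term_le hb hup)

lemma bertrandConstant_nonneg (hb : ∀ n, 1 ≤ b n) : 0 ≤ bertrandConstant b :=
  tsum_nonneg (bertrandConstant_term_nonneg hb)

lemma bertrandConstant_le_add_one (hb : ∀ n, 1 ≤ b n) (hup : ∀ n, b (n + 1) ≤ 2 * b n - 1) :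
    bertrandConstant b ≤ b 0 + 1 :=
  Real.tsum_le_of_sum_range_le (bertrandConstant_term_nonneg hb)
    (sum_range_bertrandConstant_term_le hb hup)

lemma bertrandConstant_eq_sub_one_add_div (hb : ∀ n, 1 ≤ b n)
    (hup : ∀ n, b (n + 1) ≤ 2 * b n - 1) :
    bertrandConstant b = b 0 - 1 + bertrandConstant (fun k => b (k + 1)) / b 0 := by
  rw [bertrandConstant, (summable_bertrandConstant_term hb hup).tsum_eq_zero_add, bertrandConstant,
    ← tsum_div_const]
  simp [prod_range_succ', div_div]

lemma bertrandConstant_shift (hb : ∀ n, 1 ≤ b n) (hup : ∀ n, b (n + 1) ≤ 2 * b n - 1) :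
    bertrandConstant (fun k => b (k + 1)) = b 0 * (bertrandConstant b - b 0 + 1) := by
  have : b 0 ≠ 0 := (one_pos.trans_le (hb 0)).ne'
  rw [bertrandConstant_eq_sub_one_add_div hb hup]
  field_simp
  ring

lemma sub_one_le_bertrandConstant (hb : ∀ n, 1 ≤ b n) (hup : ∀ n, b (n + 1) ≤ 2 * b n - 1) :
    b 0 - 1 ≤ bertrandConstant b := by
  rw [bertrandConstant_eq_sub_one_add_div hb hup]
  have := div_nonneg (bertrandConstant_nonneg fun n => hb (n + 1)) (zero_le_one.trans (hb 0))
  linarith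

lemma le_bertrandConstant (hb : ∀ n, 1 ≤ b n) (hup : ∀ n, b (n + 1) ≤ 2 * b n - 1)
    (h01 : b 0 + 1 ≤ b 1) : b 0 ≤ bertrandConstant b := by
  have hshift : b 0 ≤ bertrandConstant (fun k => b (k + 1)) := by
    linarith [sub_one_le_bertrandConstant (fun n => hb (n + 1)) (fun n => hup (n + 1))]
  rw [bertrandConstant_eq_sub_one_add_div hb hup]
  have : 1 ≤ bertrandConstant (fun k => b (k + 1)) / b 0 := by
    rwa [one_le_div (one_pos.trans_le (hb 0))]
  linarith

lemma bertrandConstant_lt_add_one_of_shift_lt (hb : ∀ n, 1 ≤ b n)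
    (hup : ∀ n, b (n + 1) ≤ 2 * b n - 1)
    (hshift : bertrandConstant (fun k => b (k + 1)) < 2 * b 0) :
    bertrandConstant b < b 0 + 1 := by
  rw [bertrandConstant_eq_sub_one_add_div hb hup]
  have : bertrandConstant (fun k => b (k + 1)) / b 0 < 2 := by
    rwa [div_lt_iff₀ (one_pos.trans_le (hb 0))]
  linarith

lemma bertrandConstant_lt_add_one (hb : ∀ n, 1 ≤ b n) (hup : ∀ n, b (n + 1) ≤ 2 * b n - 1)
    (d : ℕ) (hd : b (d + 1) ≤ 2 * b d - 2) : bertrandConstant b < b 0 + 1 := by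
  refine bertrandConstant_lt_add_one_of_shift_lt hb hup ?_
  induction d generalizing b with
  | zero =>
    linarith [bertrandConstant_le_add_one (fun n => hb (n + 1)) (fun n => hup (n + 1))]
  | succ d ih =>
    have := bertrandConstant_lt_add_one_of_shift_lt (fun n => hb (n + 1)) (fun n => hup (n + 1))
      (ih (fun n => hb (n + 1)) (fun n => hup (n + 1)) hd)
    linarith [hup 0]

end

section

variable {a : ℕ → ℤ}

lemma one_le_of_lt_of_le_two_mul_sub_one
    (hB : ∀ n, a n < a (n + 1) ∧ a (n + 1) ≤ 2 * a n - 1) (n : ℕ) : 1 ≤ (a n : ℝ) := by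
  have := hB n
  exact_mod_cast (by omega : 1 ≤ a n)

lemma floor_bertrandConstant (hB : ∀ n, a n < a (n + 1) ∧ a (n + 1) ≤ 2 * a n - 1)
    (hstrict : ∃ k, a (k + 1) ≤ 2 * a k - 2) :
    ⌊bertrandConstant (fun k => (a k : ℝ))⌋ = a 0 := by
  have hb := one_le_of_lt_of_le_two_mul_sub_one hB
  have hup (n : ℕ) : (a (n + 1) : ℝ) ≤ 2 * a n - 1 := by exact_mod_cast (hB n).2
  have h01 : (a 0 : ℝ) + 1 ≤ a 1 := by exact_mod_cast (hB 0).1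
  obtain ⟨d, hd⟩ := hstrict
  rw [Int.floor_eq_iff]
  exact ⟨le_bertrandConstant hb hup h01,
    bertrandConstant_lt_add_one hb hup d (by exact_mod_cast hd)⟩

end

theorem statement11_general (a : ℕ → ℤ)
    (hB : ∀ n, a n < a (n + 1) ∧ a (n + 1) ≤ 2 * a n - 1)
    (hstrict : ∀ n, ∃ k, n ≤ k ∧ a (k + 1) ≤ 2 * a k - 2)
    (f : ℕ → ℝ)
    (h1 : f 0 = ∑' k, ((a k : ℝ) - 1) / ∏ i ∈ Finset.range k, (a i : ℝ))
    (hrec : ∀ n, f (n + 1) = (⌊f n⌋ : ℝ) * (f n - ⌊f n⌋ + 1)) :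
    ∀ n, ⌊f n⌋ = a n := by
  have hBn (n : ℕ) : ∀ k, a (n + k) < a (n + k + 1) ∧ a (n + k + 1) ≤ 2 * a (n + k) - 1 :=
    fun k => hB (n + k)
  have hfloor (n : ℕ) : ⌊bertrandConstant (fun k => (a (n + k) : ℝ))⌋ = a n := by
    obtain ⟨k, hnk, hk⟩ := hstrict n
    refine floor_bertrandConstant (hBn n) ⟨k - n, ?_⟩
    simpa [← add_assoc, Nat.add_sub_cancel' hnk] using hk
  have hf (n : ℕ) : f n = bertrandConstant (fun k => (a (n + k) : ℝ)) := by
    induction n with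
    | zero => simpa [bertrandConstant] using h1
    | succ n ih =>
      have hshift := bertrandConstant_shift (one_le_of_lt_of_le_two_mul_sub_one (hBn n))
        (fun k => by exact_mod_cast (hBn n k).2)
      have hreindex : (fun k => (a (n + 1 + k) : ℝ)) = fun k => (a (n + (k + 1)) : ℝ) := by
        funext k
        rw [add_assoc, add_comm 1]
      rw [hrec, ih, hfloor, hreindex]
      exact hshift.symm
  intro n
  rw [hf, hfloor]

/-- For a sequence of integers `a` (0-indexed, so `a 0` is the paper's `a_1`)
following Bertrand's postulate, with infinitely many indices where the upper
bound is strict (`a (k+1) ≤ 2 a k - 2`), the constant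
`c = ∑_{k=1}^∞ (a_k - 1)/(a_1 ⋯ a_{k-1})` together with the recursion
`f_{n+1} = ⌊f_n⌋ (f_n - ⌊f_n⌋ + 1)` generates the whole sequence:
`⌊f n⌋ = a n` (0-indexed, `f 0 = c`). -/
theorem statement11 (a : ℕ → ℤ) (h2 : 2 ≤ a 0)
    (hB : ∀ n, a n < a (n + 1) ∧ a (n + 1) ≤ 2 * a n - 1)
    (hstrict : ∀ n, ∃ k, n ≤ k ∧ a (k + 1) ≤ 2 * a k - 2)
    (f : ℕ → ℝ)
    (h1 : f 0 = ∑' k, ((a k : ℝ) - 1) / ∏ i ∈ Finset.range k, (a i : ℝ))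
    (hrec : ∀ n, f (n + 1) = (⌊f n⌋ : ℝ) * (f n - ⌊f n⌋ + 1)) :
    ∀ n, ⌊f n⌋ = a n :=
  statement11_general a hB hstrict f h1 hrec
end

section
/- The sequence a_n = n + 1 (that is, 2, 3, 4, 5, \ldots) yields the constant \sum_{k=1}^\infty k/k! = e, and with f_1 = e and the recursion f_{n+1} = \lfloor f_n \rfloor (f_n - \lfloor f_n \rfloor + 1), one has \lfloor f_n \rfloor = n + 1 for every n \ge 1. -/
/-!
Write `rₙ = n! (e - ∑_{i<n} 1/i!) = 1 + 1/(n+1) + 1/((n+1)(n+2)) + ⋯`, so `1 ≤ rₙ < 2` for `n ≥ 1`.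
Then `fₙ = r_{n+1} + (n+1)` by induction: `⌊fₙ⌋ = n+2`, the fractional-part factor
`fₙ - ⌊fₙ⌋ + 1` is `r_{n+1}`, and `(n+2) r_{n+1} = r_{n+2} + (n+2)`.
-/

open Nat Finset

noncomputable def expRemainder (n : ℕ) : ℝ :=
  n ! * (Real.exp 1 - ∑ i ∈ range n, 1 / (i ! : ℝ))

lemma one_le_expRemainder (n : ℕ) : 1 ≤ expRemainder n := by
  have h := Real.sum_le_exp_of_nonneg zero_le_one (n + 1)
  simp only [one_pow, sum_range_succ] at h
  have hfac : (0 : ℝ) < n ! := by positivity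
  unfold expRemainder
  calc (1 : ℝ) = n ! * (1 / n !) := by field_simp
    _ ≤ _ := by gcongr; linarith

lemma expRemainder_le {n : ℕ} (hn : 0 < n) : expRemainder n ≤ (n + 1) / n := by
  have h := Real.exp_bound' zero_le_one le_rfl hn
  simp only [one_pow, one_mul] at h
  have hfac : (0 : ℝ) < n ! := by positivity
  unfold expRemainder
  calc _ ≤ (n ! : ℝ) * ((n + 1) / (n ! * n)) := by gcongr; linarith
    _ = (n + 1) / n := by field_simp

lemma expRemainder_lt_two {n : ℕ} (hn : 0 < n) : expRemainder n < 2 := by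
  obtain rfl | hn2 := Nat.eq_or_lt_of_le hn
  · norm_num [expRemainder]
    linarith [Real.exp_one_lt_three]
  · have h2 : (2 : ℝ) ≤ n := by exact_mod_cast hn2
    calc _ ≤ ((n : ℝ) + 1) / n := expRemainder_le hn
      _ < 2 := by rw [div_lt_iff₀ (by positivity)]; linarith

lemma expRemainder_succ (n : ℕ) : expRemainder (n + 1) = (n + 1) * (expRemainder n - 1) := by
  have hfac : (n ! : ℝ) ≠ 0 := by positivity
  simp only [expRemainder, sum_range_succ, factorial_succ]
  push_cast
  field_simp
  ring

lemma floor_expRemainder_add {n : ℕ} (hn : 0 < n) (m : ℤ) : ⌊expRemainder n + m⌋ = m + 1 := by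
  rw [Int.floor_add_intCast, add_comm, add_right_inj, Int.floor_eq_iff]
  exact ⟨mod_cast one_le_expRemainder n, by norm_num [expRemainder_lt_two hn]⟩

lemma hasSum_succ_div_factorial_succ :
    HasSum (fun k : ℕ => ((k : ℝ) + 1) / (k + 1)!) (Real.exp 1) := by
  have hterm (k : ℕ) : ((k : ℝ) + 1) / (k + 1)! = 1 ^ k / k ! := by
    have hfac : (k ! : ℝ) ≠ 0 := by positivity
    rw [one_pow, factorial_succ]
    push_cast
    field_simp
  simp only [hterm]
  rw [Real.exp_eq_exp_ℝ]
  exact NormedSpace.expSeries_div_hasSum_exp 1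

/-- The sequence `a_n = n + 1` (i.e. `2, 3, 4, …`) yields the constant
`∑_{k=1}^∞ k/k! = e`, and the recursion `f_{n+1} = ⌊f_n⌋ (f_n - ⌊f_n⌋ + 1)`
starting from `f 0 = e` has `⌊f n⌋ = n + 2` (0-indexed; i.e. the paper's
`⌊f_n⌋ = n + 1` for `n ≥ 1`). -/
theorem statement13 (f : ℕ → ℝ)
    (h1 : f 0 = Real.exp 1)
    (hrec : ∀ n, f (n + 1) = (⌊f n⌋ : ℝ) * (f n - ⌊f n⌋ + 1)) :
    (∑' k : ℕ, ((k : ℝ) + 1) / (Nat.factorial (k + 1) : ℝ)) = Real.exp 1 ∧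
      ∀ n, ⌊f n⌋ = (n : ℤ) + 2 := by
  have hf (n : ℕ) : f n = expRemainder (n + 1) + ((n : ℤ) + 1 : ℤ) := by
    induction n with
    | zero => simp [h1, expRemainder]
    | succ n ih =>
      rw [hrec, ih, floor_expRemainder_add n.succ_pos, expRemainder_succ (n + 1)]
      push_cast
      ring
  refine ⟨hasSum_succ_div_factorial_succ.tsum_eq, fun n => ?_⟩
  rw [hf, floor_expRemainder_add n.succ_pos]
  ring
end

section
/- Consider the sequence a_n = 2^{n-1} + 2 (that is, 3, 4, 6, 10, 18, 34, \ldots). Let c = \sum_{k=1}^\infty (2^{k-1} + 1)/\prod_{i=1}^{k-1} (2^{i-1} + 2) (the empty product for k = 1 being 1). Then c converges, and with f_1 = c and the recursion f_{n+1} = \lfloor f_n \rfloor (f_n - \lfloor f_n \rfloor + 1), one has \lfloor f_n \rfloor = 2^{n-1} + 2 for every n \ge 1. -/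
/-!
Write `P k = a 0 ⋯ a (k-1)` and `c(a) = ∑ₖ (a k - 1) / P k`. Peeling off the first term gives
`c(a) = a 0 - 1 + c(a 1, a 2, …) / a 0`, which is exactly the inverse of one step of the recursion
`f ↦ ⌊f⌋ (f - ⌊f⌋ + 1)` once `⌊c(a)⌋ = a 0` is known; so the recursion walks through the tails of the
series. The floor is controlled by `a 0 ≤ c(a) < a 0 + 1`: the quantity
`∑_{k<K} (a k - 1) / P k + (a K + 1) / P K` does not increase in `K` as long as
`a (k+1) + 1 ≤ 2 a k`, giving `c(a) ≤ a 0 + 1`; feeding this bound for the tail into the peeling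
identity makes it strict when `a 1 ≤ 2 a 0 - 2`.
-/

open Finset

namespace FloorRecursion

noncomputable def term (a : ℕ → ℝ) (k : ℕ) : ℝ := (a k - 1) / ∏ i ∈ range k, a i

section Series

variable {a : ℕ → ℝ}

lemma prod_range_pos (hpos : ∀ n, 0 < a n) (k : ℕ) : 0 < ∏ i ∈ range k, a i :=
  prod_pos fun i _ => hpos i

lemma term_nonneg (hone : ∀ n, 1 ≤ a n) (k : ℕ) : 0 ≤ term a k :=
  div_nonneg (sub_nonneg.2 (hone k)) (prod_range_pos (fun n => by linarith [hone n]) k).le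

lemma term_add_div_prod_le (hpos : ∀ n, 0 < a n) (k : ℕ) (hk : a (k + 1) + 1 ≤ 2 * a k) :
    term a k + (a (k + 1) + 1) / ∏ i ∈ range (k + 1), a i ≤ (a k + 1) / ∏ i ∈ range k, a i := by
  have hP := prod_range_pos hpos k
  have hak := hpos k
  have hnext : (a (k + 1) + 1) / ∏ i ∈ range (k + 1), a i ≤ 2 / ∏ i ∈ range k, a i := by
    rw [prod_range_succ, div_le_div_iff₀ (by positivity) hP]
    nlinarith [mul_le_mul_of_nonneg_left hk hP.le]
  calc term a k + (a (k + 1) + 1) / ∏ i ∈ range (k + 1), a i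
      ≤ (a k - 1) / ∏ i ∈ range k, a i + 2 / ∏ i ∈ range k, a i := by
        rw [term]; linarith
    _ = (a k + 1) / ∏ i ∈ range k, a i := by ring

lemma sum_range_term_add_div_prod_le (hpos : ∀ n, 0 < a n)
    (hle : ∀ n, a (n + 1) + 1 ≤ 2 * a n) (K : ℕ) :
    ∑ k ∈ range K, term a k + (a K + 1) / ∏ i ∈ range K, a i ≤ a 0 + 1 := by
  induction K with
  | zero => simp
  | succ K ih =>
    rw [sum_range_succ, add_assoc]
    linarith [term_add_div_prod_le hpos K (hle K)]

lemma sum_range_term_le (hone : ∀ n, 1 ≤ a n) (hle : ∀ n, a (n + 1) + 1 ≤ 2 * a n) (K : ℕ) :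
    ∑ k ∈ range K, term a k ≤ a 0 + 1 := by
  have hpos : ∀ n, 0 < a n := fun n => by linarith [hone n]
  have := sum_range_term_add_div_prod_le hpos hle K
  have : 0 ≤ (a K + 1) / ∏ i ∈ range K, a i :=
    div_nonneg (by linarith [hpos K]) (prod_range_pos hpos K).le
  linarith

lemma summable_term (hone : ∀ n, 1 ≤ a n) (hle : ∀ n, a (n + 1) + 1 ≤ 2 * a n) :
    Summable (term a) :=
  summable_of_sum_range_le (term_nonneg hone) (sum_range_term_le hone hle)

lemma tsum_term_le (hone : ∀ n, 1 ≤ a n) (hle : ∀ n, a (n + 1) + 1 ≤ 2 * a n) :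
    ∑' k, term a k ≤ a 0 + 1 :=
  Real.tsum_le_of_sum_range_le (term_nonneg hone) (sum_range_term_le hone hle)

lemma term_succ (k : ℕ) : term a (k + 1) = term (fun n => a (n + 1)) k / a 0 := by
  simp only [term, prod_range_succ', div_div]

lemma tsum_term_eq (hs : Summable (term a)) :
    ∑' k, term a k = a 0 - 1 + (∑' k, term (fun n => a (n + 1)) k) / a 0 := by
  rw [hs.tsum_eq_zero_add]
  simp only [term_succ, tsum_div_const]
  simp [term]

lemma tsum_term_lt (hone : ∀ n, 1 ≤ a n) (hle : ∀ n, a (n + 1) + 1 ≤ 2 * a n)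
    (h01 : a 1 + 2 ≤ 2 * a 0) : ∑' k, term a k < a 0 + 1 := by
  have htail : ∑' k, term (fun n => a (n + 1)) k ≤ a 1 + 1 :=
    tsum_term_le (fun n => hone (n + 1)) (fun n => hle (n + 1))
  have ha0 : 0 < a 0 := by linarith [hone 0]
  rw [tsum_term_eq (summable_term hone hle)]
  have : (∑' k, term (fun n => a (n + 1)) k) / a 0 < 2 := by
    rw [div_lt_iff₀ ha0]; linarith
  linarith

lemma le_tsum_term (hone : ∀ n, 1 ≤ a n) (hle : ∀ n, a (n + 1) + 1 ≤ 2 * a n)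
    (h01 : a 0 + 1 ≤ a 1) : a 0 ≤ ∑' k, term a k := by
  have htail : a 1 - 1 ≤ ∑' k, term (fun n => a (n + 1)) k := by
    have := (summable_term (fun n => hone (n + 1)) (fun n => hle (n + 1))).le_tsum 0
      (fun j _ => term_nonneg (fun n => hone (n + 1)) j)
    simpa [term] using this
  have ha0 : 0 < a 0 := by linarith [hone 0]
  rw [tsum_term_eq (summable_term hone hle)]
  have : 1 ≤ (∑' k, term (fun n => a (n + 1)) k) / a 0 := by
    rw [le_div_iff₀ ha0]; linarith
  linarith

end Series

section Floor

variable {a : ℕ → ℤ}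

lemma one_le_cast (hlt : ∀ n, a n < a (n + 1)) (hle : ∀ n, a (n + 1) ≤ 2 * a n - 2) (n : ℕ) :
    (1 : ℝ) ≤ a n := by
  have := hlt n; have := hle n
  exact_mod_cast (by omega : (1 : ℤ) ≤ a n)

lemma cast_succ_add_one_le (hle : ∀ n, a (n + 1) ≤ 2 * a n - 2) (n : ℕ) :
    (a (n + 1) : ℝ) + 1 ≤ 2 * a n := by
  have := hle n
  exact_mod_cast (by omega : a (n + 1) + 1 ≤ 2 * a n)

lemma summable_term_cast (hlt : ∀ n, a n < a (n + 1)) (hle : ∀ n, a (n + 1) ≤ 2 * a n - 2) :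
    Summable (term fun n => (a n : ℝ)) :=
  summable_term (one_le_cast hlt hle) (cast_succ_add_one_le hle)

lemma floor_tsum_term (hlt : ∀ n, a n < a (n + 1)) (hle : ∀ n, a (n + 1) ≤ 2 * a n - 2) :
    ⌊∑' k, term (fun n => (a n : ℝ)) k⌋ = a 0 := by
  rw [Int.floor_eq_iff]
  constructor
  · exact le_tsum_term (one_le_cast hlt hle) (cast_succ_add_one_le hle)
      (by exact_mod_cast hlt 0)
  · exact tsum_term_lt (one_le_cast hlt hle) (cast_succ_add_one_le hle)
      (by exact_mod_cast (by linarith [hle 0] : a 1 + 2 ≤ 2 * a 0))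

theorem iterate_eq_tsum_term (hlt : ∀ n, a n < a (n + 1)) (hle : ∀ n, a (n + 1) ≤ 2 * a n - 2)
    {f : ℕ → ℝ} (h0 : f 0 = ∑' k, term (fun n => (a n : ℝ)) k)
    (hrec : ∀ n, f (n + 1) = (⌊f n⌋ : ℝ) * (f n - ⌊f n⌋ + 1)) (n : ℕ) :
    f n = ∑' k, term (fun k => (a (n + k) : ℝ)) k := by
  induction n with
  | zero => simpa using h0
  | succ n ih =>
    have hfloor : ⌊f n⌋ = a n := by
      rw [ih]; exact floor_tsum_term (fun k => hlt (n + k)) (fun k => hle (n + k))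
    have hpeel := tsum_term_eq
      (summable_term_cast (fun k => hlt (n + k)) (fun k => hle (n + k)))
    rw [show (fun k => (a (n + (k + 1)) : ℝ)) = fun k => (a (n + 1 + k) : ℝ) from
      funext fun k => by rw [← add_assoc, add_right_comm], add_zero] at hpeel
    have ha : (a n : ℝ) ≠ 0 := by
      have := hlt n; have := hle n; exact_mod_cast (by omega : a n ≠ 0)
    rw [hrec, hfloor, ih, hpeel]
    field_simp
    ring

theorem floor_iterate_eq (hlt : ∀ n, a n < a (n + 1)) (hle : ∀ n, a (n + 1) ≤ 2 * a n - 2)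
    {f : ℕ → ℝ} (h0 : f 0 = ∑' k, term (fun n => (a n : ℝ)) k)
    (hrec : ∀ n, f (n + 1) = (⌊f n⌋ : ℝ) * (f n - ⌊f n⌋ + 1)) (n : ℕ) : ⌊f n⌋ = a n := by
  rw [iterate_eq_tsum_term hlt hle h0 hrec n]
  exact floor_tsum_term (fun k => hlt (n + k)) (fun k => hle (n + k))

end Floor

end FloorRecursion

/-- The sequence `a_n = 2^{n-1} + 2` (i.e. `3, 4, 6, 10, 18, 34, …`; here 0-indexed
as `a n = 2^n + 2`) yields a convergent series
`c = ∑_{k=1}^∞ (2^{k-1} + 1)/∏_{i=1}^{k-1} (2^{i-1} + 2)`, and the recursion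
`f_{n+1} = ⌊f_n⌋ (f_n - ⌊f_n⌋ + 1)` starting from `f 0 = c` has
`⌊f n⌋ = 2^n + 2`. -/
theorem statement14 (f : ℕ → ℝ)
    (h1 : f 0 = ∑' k : ℕ, ((2 : ℝ) ^ k + 1) / ∏ i ∈ Finset.range k, ((2 : ℝ) ^ i + 2))
    (hrec : ∀ n, f (n + 1) = (⌊f n⌋ : ℝ) * (f n - ⌊f n⌋ + 1)) :
    Summable (fun k : ℕ => ((2 : ℝ) ^ k + 1) / ∏ i ∈ Finset.range k, ((2 : ℝ) ^ i + 2)) ∧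
      ∀ n, ⌊f n⌋ = 2 ^ n + 2 := by
  have hterm : FloorRecursion.term (fun n => ((2 ^ n + 2 : ℤ) : ℝ)) =
      fun k : ℕ => ((2 : ℝ) ^ k + 1) / ∏ i ∈ Finset.range k, ((2 : ℝ) ^ i + 2) := by
    ext k; simp only [FloorRecursion.term]; push_cast; ring
  have hlt : ∀ n, (2 : ℤ) ^ n + 2 < 2 ^ (n + 1) + 2 := fun n => by
    have : (0 : ℤ) < 2 ^ n := by positivity
    rw [pow_succ]; linarith
  have hle : ∀ n, (2 : ℤ) ^ (n + 1) + 2 ≤ 2 * (2 ^ n + 2) - 2 := fun n => by rw [pow_succ]; linarith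
  refine ⟨?_, FloorRecursion.floor_iterate_eq hlt hle (by rw [hterm]; exact h1) hrec⟩
  rw [← hterm]
  exact FloorRecursion.summable_term_cast hlt hle
end
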